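/- arXiv:1811.02768 — 4 statements merged into one kernel-verified Lean document; each statement's English description precedes it below -/
import Mathlib

section
/- Let n ≥ 1 and let a/b and c/d be fractions in lowest terms with 0 ≤ a/b < c/d ≤ 1, b ≤ n, and d ≤ n. If a/b and c/d are Farey neighbours in F_n, then b·c − a·d = 1. -/
/-- If `a/b < c/d` (in lowest terms, in `[0,1]`, denominators at most `n`) are
Farey neighbours in `F_n`, then `b·c − a·d = 1`. -/
theorem farey_neighbours_det (n : ℕ) (hn : 1 ≤ n) (F : Finset ℚ)
    (hF : ∀ q : ℚ, q ∈ F ↔ 0 ≤ q ∧ q ≤ 1 ∧ q.den ≤ n)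
    (a b c d : ℤ) (hb : 0 < b) (hd : 0 < d)
    (hab : Int.gcd a b = 1) (hcd : Int.gcd c d = 1)
    (h0 : 0 ≤ (a : ℚ) / b) (hlt : (a : ℚ) / b < (c : ℚ) / d) (h1 : (c : ℚ) / d ≤ 1)
    (hbn : b ≤ (n : ℤ)) (hdn : d ≤ (n : ℤ))
    (hneigh : ∀ r ∈ F, ¬((a : ℚ) / b < r ∧ r < (c : ℚ) / d)) :
    b * c - a * d = 1 := by
  have hbQ : (0 : ℚ) < (b : ℚ) := by exact_mod_cast hb
  have hdQ : (0 : ℚ) < (d : ℚ) := by exact_mod_cast hd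
  -- k := b*c - a*d ≥ 1
  have hk1 : 1 ≤ b * c - a * d := by
    have := (div_lt_div_iff₀ hbQ hdQ).mp hlt
    have : a * d < c * b := by exact_mod_cast this
    nlinarith
  -- solve b*p0 - a*q0 = 1
  obtain ⟨u, v, huv⟩ := (Int.isCoprime_iff_gcd_eq_one.mpr hab)
  set p0 : ℤ := v with hp0
  set q0 : ℤ := -u with hq0
  have hbase : b * p0 - a * q0 = 1 := by simp [hp0, hq0]; linarith
  -- shift so that n - b < q ≤ n
  set t : ℤ := ((n : ℤ) - q0) / b with ht
  set q : ℤ := q0 + b * t with hqdef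
  set p : ℤ := p0 + a * t with hpdef
  have hbp : b * p - a * q = 1 := by
    simp only [hpdef, hqdef]; ring_nf; ring_nf at hbase; linarith
  have hmod := Int.emod_emod_of_dvd ((n:ℤ) - q0) (dvd_refl b)
  have hdiv := Int.mul_ediv_add_emod ((n:ℤ) - q0) b
  have hmod0 : 0 ≤ ((n:ℤ) - q0) % b := Int.emod_nonneg _ hb.ne'
  have hmodlt : ((n:ℤ) - q0) % b < b := Int.emod_lt_of_pos _ hb
  have hq_eq : q = (n:ℤ) - ((n:ℤ) - q0) % b := by simp only [hqdef, ht]; omega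
  have hqn : q ≤ (n : ℤ) := by omega
  have hqgt : (n : ℤ) - b < q := by omega
  have hq0' : 0 < q := by omega
  have hqQ : (0 : ℚ) < (q : ℚ) := by exact_mod_cast hq0'
  have hpq : Int.gcd p q = 1 := by
    rw [← Int.isCoprime_iff_gcd_eq_one]
    exact ⟨b, -a, by linarith [hbp]⟩
  -- a/b < p/q
  have hl : (a : ℚ) / b < (p : ℚ) / q := by
    rw [div_lt_div_iff₀ hbQ hqQ]
    have : a * q < p * b := by nlinarith [hbp]
    exact_mod_cast this
  -- p/q ≤ c/d
  have hr : (p : ℚ) / q ≤ (c : ℚ) / d := by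
    by_contra hcon
    push_neg at hcon
    have : c * q < p * d := by
      have := (div_lt_div_iff₀ hdQ hqQ).mp hcon
      exact_mod_cast this
    nlinarith [hbp]
  -- p/q ∈ F
  have hden : (((p : ℚ) / q).den : ℤ) = q :=
    Rat.den_div_eq_of_coprime hq0' hpq
  have hmem : ((p : ℚ) / q) ∈ F := by
    rw [hF]
    refine ⟨le_trans h0 hl.le, le_trans hr h1, ?_⟩
    have : (((p : ℚ) / q).den : ℤ) ≤ (n : ℤ) := by rw [hden]; exact hqn
    exact_mod_cast this
  have := hneigh _ hmem
  have heq : (p : ℚ) / q = (c : ℚ) / d := by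
    rcases lt_or_eq_of_le hr with h' | h'
    · exact absurd ⟨hl, h'⟩ this
    · exact h'
  obtain ⟨hpc, hqd⟩ := Rat.div_int_inj hq0' hd hpq hcd heq
  rw [hpc, hqd] at hbp
  linarith
end

section
/- Let n ≥ 1 and let a/b and c/d be fractions with 0 ≤ a/b < c/d ≤ 1, b ≤ n, d ≤ n, and b·c − a·d = 1. If moreover b + d > n, then a/b and c/d are Farey neighbours in F_n. (Note that b·c − a·d = 1 forces both fractions to be in lowest terms, hence elements of F_n.) -/
/-- If `0 ≤ a/b < c/d ≤ 1` with `b, d ≤ n`, `b·c − a·d = 1` and `b + d > n`,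
then `a/b` and `c/d` are Farey neighbours in `F_n` (in particular both lie
in `F_n`). -/
theorem farey_neighbours_of_det (n : ℕ) (hn : 1 ≤ n) (F : Finset ℚ)
    (hF : ∀ q : ℚ, q ∈ F ↔ 0 ≤ q ∧ q ≤ 1 ∧ q.den ≤ n)
    (a b c d : ℤ) (hb : 0 < b) (hd : 0 < d)
    (h0 : 0 ≤ (a : ℚ) / b) (hlt : (a : ℚ) / b < (c : ℚ) / d) (h1 : (c : ℚ) / d ≤ 1)
    (hbn : b ≤ (n : ℤ)) (hdn : d ≤ (n : ℤ))
    (hdet : b * c - a * d = 1) (hsum : (n : ℤ) < b + d) :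
    (a : ℚ) / b ∈ F ∧ (c : ℚ) / d ∈ F ∧
      ∀ r ∈ F, ¬((a : ℚ) / b < r ∧ r < (c : ℚ) / d) := by
  have hab : Nat.Coprime a.natAbs b.natAbs := by
    have : IsCoprime a b := ⟨-d, c, by linarith⟩
    exact Int.isCoprime_iff_gcd_eq_one.mp this
  have hcd : Nat.Coprime c.natAbs d.natAbs := by
    have : IsCoprime c d := ⟨b, -a, by linarith⟩
    exact Int.isCoprime_iff_gcd_eq_one.mp this
  have hdenab : (((a : ℚ) / b).den : ℤ) = b := Rat.den_div_eq_of_coprime hb hab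
  have hdencd : (((c : ℚ) / d).den : ℤ) = d := Rat.den_div_eq_of_coprime hd hcd
  have hbQ : (0 : ℚ) < b := by exact_mod_cast hb
  have hdQ : (0 : ℚ) < d := by exact_mod_cast hd
  refine ⟨?_, ?_, ?_⟩
  · rw [hF]
    exact ⟨h0, le_trans hlt.le h1, by omega⟩
  · rw [hF]
    exact ⟨le_trans h0 hlt.le, h1, by omega⟩
  · rintro r hr ⟨h2, h3⟩
    obtain ⟨-, -, hrden⟩ := (hF r).mp hr
    have hq : (0 : ℚ) < (r.den : ℚ) := by positivity
    rw [← Rat.num_div_den r] at h2 h3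
    rw [div_lt_div_iff₀ hbQ hq] at h2
    rw [div_lt_div_iff₀ hq hdQ] at h3
    have h2' : a * (r.den : ℤ) < r.num * b := by exact_mod_cast h2
    have h3' : r.num * d < c * (r.den : ℤ) := by exact_mod_cast h3
    have hdn' : (n : ℤ) < (r.den : ℤ) := by nlinarith
    omega
end

section
/- Let n ≥ 2 and let p < q be Farey neighbours in F_{n-1} such that p.den + q.den = n. Then the mediant m = (p.num + q.num)/(p.den + q.den) is in lowest terms, m belongs to F_n, p < m < q, and p, m as well as m, q are Farey neighbours in F_n. -/
/-!
Write `fareyDet p q = q.num * p.den - p.num * q.den`. If `fareyDet p q = 1`, every `r` strictly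
between `p` and `q` satisfies `r.den ≥ p.den + q.den`, because
`r.den = p.den * fareyDet r q + q.den * fareyDet p r` with both determinants positive.

Neighbours `p = a/b < q` in `F_{n-1}` with `b + q.den = n` have determinant `1`: choose `X, Y` with
`b * Y - a * X = 1` and `n - 1 - b < X ≤ n - 1`. Then `Y/X` lies in `F_{n-1}` to the right of `p`,
and it cannot lie beyond `q`, since then `q.den ≥ b + X ≥ n`; so `Y/X = q`. The mediant has
determinant `1` with both `p` and `q`, hence it is reduced with denominator `n`, and by the first
fact no element of `F_n` separates it from `p` or from `q`.
-/

def fareySet (N : ℕ) : Set ℚ := {q | 0 ≤ q ∧ q ≤ 1 ∧ q.den ≤ N}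

def fareyDet (p q : ℚ) : ℤ := q.num * p.den - p.num * q.den

def mediant (p q : ℚ) : ℚ := (p.num + q.num : ℚ) / ((p.den : ℚ) + (q.den : ℚ))

theorem lt_of_fareyDet_eq_one {p q : ℚ} (h : fareyDet p q = 1) : p < q := by
  rw [Rat.lt_iff]
  unfold fareyDet at h
  linarith

theorem den_add_den_le_of_fareyDet_eq_one {p q r : ℚ} (h : fareyDet p q = 1) (hpr : p < r)
    (hrq : r < q) : p.den + q.den ≤ r.den := by
  rw [Rat.lt_iff] at hpr hrq
  unfold fareyDet at h
  have hr : (r.den : ℤ) = p.den * (q.num * r.den - r.num * q.den)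
      + q.den * (r.num * p.den - p.num * r.den) := by
    linear_combination -(r.den : ℤ) * h
  have hleft : (p.den : ℤ) ≤ p.den * (q.num * r.den - r.num * q.den) :=
    le_mul_of_one_le_right (by positivity) (by linarith)
  have hright : (q.den : ℤ) ≤ q.den * (r.num * p.den - p.num * r.den) :=
    le_mul_of_one_le_right (by positivity) (by linarith)
  omega

theorem Rat.num_den_div_of_isCoprime {a b : ℤ} (hb : 0 < b) (h : IsCoprime a b) :
    ((a : ℚ) / b).num = a ∧ (((a : ℚ) / b).den : ℤ) = b := by
  have h' : Nat.Coprime a.natAbs b.natAbs := Int.isCoprime_iff_gcd_eq_one.mp h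
  exact ⟨Rat.num_div_eq_of_coprime hb h', Rat.den_div_eq_of_coprime hb h'⟩

theorem Int.exists_mul_sub_mul_eq_one_of_isCoprime {a b : ℤ} (hab : IsCoprime a b) (hb : 0 < b)
    (N : ℤ) : ∃ X Y : ℤ, N - b < X ∧ X ≤ N ∧ b * Y - a * X = 1 := by
  obtain ⟨u, v, huv⟩ := hab
  refine ⟨N - (N + u) % b, v + a * ((N + u) / b), ?_, ?_, ?_⟩
  · linarith [Int.emod_lt_of_pos (N + u) hb]
  · linarith [Int.emod_nonneg (N + u) hb.ne']
  · linear_combination huv + a * Int.mul_ediv_add_emod (N + u) b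

theorem fareyDet_eq_one_of_neighbours {N : ℕ} {p q : ℚ} (hp : 0 ≤ p) (hq : q ≤ 1) (hpq : p < q)
    (hneigh : ∀ r ∈ fareySet N, ¬(p < r ∧ r < q)) (hden : p.den + q.den = N + 1) :
    fareyDet p q = 1 := by
  have hcop : IsCoprime p.num p.den := Int.isCoprime_iff_gcd_eq_one.mpr p.reduced
  obtain ⟨X, Y, hXlo, hXhi, hXY⟩ :=
    Int.exists_mul_sub_mul_eq_one_of_isCoprime hcop (by exact_mod_cast p.den_pos) N
  have hX : 0 < X := by have := q.den_pos; omega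
  obtain ⟨hnum, hden'⟩ :=
    Rat.num_den_div_of_isCoprime hX (⟨p.den, -p.num, by linarith⟩ : IsCoprime Y X)
  set r : ℚ := (Y : ℚ) / X
  have hdet : fareyDet p r = 1 := by
    unfold fareyDet
    rw [hnum, hden']
    linarith
  have hpr : p < r := lt_of_fareyDet_eq_one hdet
  have hrq : r ≤ q := not_lt.mp fun hqr => by
    have := den_add_den_le_of_fareyDet_eq_one hdet hpq hqr
    omega
  have hrF : r ∈ fareySet N := ⟨hp.trans hpr.le, hrq.trans hq, by omega⟩
  have hqr : q ≤ r := not_lt.mp fun hrq' => hneigh r hrF ⟨hpr, hrq'⟩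
  rwa [← le_antisymm hrq hqr]

section Mediant

variable {p q : ℚ}

theorem mediant_eq : mediant p q = ((p.num + q.num : ℤ) : ℚ) / ((p.den + q.den : ℤ) : ℚ) := by
  unfold mediant
  push_cast
  rfl

theorem isCoprime_num_add_num_den_add_den (h : fareyDet p q = 1) :
    IsCoprime (p.num + q.num) (p.den + q.den : ℤ) :=
  ⟨-q.den, q.num, by unfold fareyDet at h; linear_combination h⟩

theorem num_den_mediant (h : fareyDet p q = 1) :
    (mediant p q).num = p.num + q.num ∧ ((mediant p q).den : ℤ) = p.den + q.den := by
  rw [mediant_eq]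
  exact Rat.num_den_div_of_isCoprime (by positivity) (isCoprime_num_add_num_den_add_den h)

theorem fareyDet_left_mediant (h : fareyDet p q = 1) : fareyDet p (mediant p q) = 1 := by
  obtain ⟨hnum, hden⟩ := num_den_mediant h
  unfold fareyDet at h ⊢
  rw [hnum, hden]
  linear_combination h

theorem fareyDet_mediant_right (h : fareyDet p q = 1) : fareyDet (mediant p q) q = 1 := by
  obtain ⟨hnum, hden⟩ := num_den_mediant h
  unfold fareyDet at h ⊢
  rw [hnum, hden]
  linear_combination h

end Mediant

theorem farey_mediant_insert_general (n : ℕ) (F G : Finset ℚ)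
    (hF : ∀ q : ℚ, q ∈ F ↔ 0 ≤ q ∧ q ≤ 1 ∧ q.den ≤ n)
    (hG : ∀ q : ℚ, q ∈ G ↔ 0 ≤ q ∧ q ≤ 1 ∧ q.den ≤ n - 1)
    (p q : ℚ) (hp : p ∈ G) (hq : q ∈ G) (hpq : p < q)
    (hneigh : ∀ r ∈ G, ¬(p < r ∧ r < q))
    (hden : p.den + q.den = n) :
    Int.gcd (p.num + q.num) ((p.den : ℤ) + (q.den : ℤ)) = 1 ∧
    ((p.num + q.num : ℚ)) / ((p.den : ℚ) + (q.den : ℚ)) ∈ F ∧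
    p < ((p.num + q.num : ℚ)) / ((p.den : ℚ) + (q.den : ℚ)) ∧
    ((p.num + q.num : ℚ)) / ((p.den : ℚ) + (q.den : ℚ)) < q ∧
    (∀ r ∈ F, ¬(p < r ∧ r < ((p.num + q.num : ℚ)) / ((p.den : ℚ) + (q.den : ℚ)))) ∧
    (∀ r ∈ F, ¬(((p.num + q.num : ℚ)) / ((p.den : ℚ) + (q.den : ℚ)) < r ∧ r < q)) := by
  have hp0 : 0 ≤ p := ((hG p).mp hp).1
  have hq1 : q ≤ 1 := ((hG q).mp hq).2.1
  have hdet : fareyDet p q = 1 :=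
    fareyDet_eq_one_of_neighbours hp0 hq1 hpq (fun r hr => hneigh r ((hG r).mpr hr))
      (by have := q.den_pos; omega)
  have hpm := fareyDet_left_mediant hdet
  have hmq := fareyDet_mediant_right hdet
  have hmden : (mediant p q).den = n := by have := (num_den_mediant hdet).2; omega
  refine ⟨Int.isCoprime_iff_gcd_eq_one.mp (isCoprime_num_add_num_den_add_den hdet),
    (hF _).mpr ⟨hp0.trans (lt_of_fareyDet_eq_one hpm).le,
      (lt_of_fareyDet_eq_one hmq).le.trans hq1, hmden.le⟩,
    lt_of_fareyDet_eq_one hpm, lt_of_fareyDet_eq_one hmq, ?_, ?_⟩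
  · rintro r hr ⟨hpr, hrm⟩
    have := den_add_den_le_of_fareyDet_eq_one hpm hpr hrm
    have := ((hF r).mp hr).2.2
    have := p.den_pos
    omega
  · rintro r hr ⟨hmr, hrq⟩
    have := den_add_den_le_of_fareyDet_eq_one hmq hmr hrq
    have := ((hF r).mp hr).2.2
    have := q.den_pos
    omega

/-- If `p < q` are Farey neighbours in `F_{n-1}` with `p.den + q.den = n`, then
the mediant `m = (p.num + q.num)/(p.den + q.den)` is in lowest terms, lies in
`F_n` strictly between `p` and `q`, and both `p, m` and `m, q` are Farey
neighbours in `F_n`. -/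
theorem farey_mediant_insert (n : ℕ) (hn : 2 ≤ n) (F G : Finset ℚ)
    (hF : ∀ q : ℚ, q ∈ F ↔ 0 ≤ q ∧ q ≤ 1 ∧ q.den ≤ n)
    (hG : ∀ q : ℚ, q ∈ G ↔ 0 ≤ q ∧ q ≤ 1 ∧ q.den ≤ n - 1)
    (p q : ℚ) (hp : p ∈ G) (hq : q ∈ G) (hpq : p < q)
    (hneigh : ∀ r ∈ G, ¬(p < r ∧ r < q))
    (hden : p.den + q.den = n) :
    Int.gcd (p.num + q.num) ((p.den : ℤ) + (q.den : ℤ)) = 1 ∧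
    ((p.num + q.num : ℚ)) / ((p.den : ℚ) + (q.den : ℚ)) ∈ F ∧
    p < ((p.num + q.num : ℚ)) / ((p.den : ℚ) + (q.den : ℚ)) ∧
    ((p.num + q.num : ℚ)) / ((p.den : ℚ) + (q.den : ℚ)) < q ∧
    (∀ r ∈ F, ¬(p < r ∧ r < ((p.num + q.num : ℚ)) / ((p.den : ℚ) + (q.den : ℚ)))) ∧
    (∀ r ∈ F, ¬(((p.num + q.num : ℚ)) / ((p.den : ℚ) + (q.den : ℚ)) < r ∧ r < q)) :=
  farey_mediant_insert_general n F G hF hG p q hp hq hpq hneigh hden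
end

section
/- For every natural number n ≥ 1, the list of denominators (in lowest terms) of the elements of the Farey set F_n, listed in increasing order of the elements, is a palindrome; that is, this list of denominators equals its own reverse. -/
/-!
Reflection `q ↦ 1 - q` maps `F_n` onto itself, reverses the order and preserves
denominators. Hence reflecting the sorted list of `F_n` yields the same list reversed,
while leaving its list of denominators unchanged.
-/

theorem Finset.image_eq_self_of_involutive {α : Type*} [DecidableEq α] {f : α → α}
    (hf : f.Involutive) {s : Finset α} (hs : ∀ a ∈ s, f a ∈ s) : s.image f = s :=
  Finset.Subset.antisymm (Finset.image_subset_iff.2 hs)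
    fun a ha => Finset.mem_image.2 ⟨f a, hs a ha, hf a⟩

theorem StrictAntiOn.map_finsetSort {α β : Type*} [LinearOrder α] [LinearOrder β]
    {f : α → β} {s : Finset α} (hf : StrictAntiOn f s) :
    s.sort.map f = (s.image f).sort.reverse := by
  have hanti : (s.sort.map f).SortedGT := by
    refine (List.pairwise_map.2 ((Finset.sortedLT_sort s).pairwise.imp_of_mem ?_)).sortedGT
    intro a b ha hb hab
    exact hf ((Finset.mem_sort _).1 ha) ((Finset.mem_sort _).1 hb) hab
  refine hanti.eq_reverse_of_mem_iff_of_sortedLT (fun b => ?_) (Finset.sortedLT_sort _)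
  simp only [List.mem_map, Finset.mem_sort, Finset.mem_image]

theorem farey_den_list_palindrome_general (n : ℕ) (F : Finset ℚ)
    (hF : ∀ q : ℚ, q ∈ F ↔ 0 ≤ q ∧ q ≤ 1 ∧ q.den ≤ n) :
    ((F.sort (· ≤ ·)).map Rat.den).reverse = (F.sort (· ≤ ·)).map Rat.den := by
  have hreflect : ∀ q ∈ F, 1 - q ∈ F := fun q hq => by
    obtain ⟨h0, h1, hden⟩ := (hF q).1 hq
    exact (hF _).2 ⟨by linarith, by linarith, (Rat.ofNat_sub_den 1 q).symm ▸ hden⟩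
  have hsymm : F.image (1 - ·) = F :=
    Finset.image_eq_self_of_involutive (fun q => sub_sub_cancel 1 q) hreflect
  have hsort : F.sort.map (1 - ·) = F.sort.reverse := by
    conv_rhs => rw [← hsymm]
    exact StrictAntiOn.map_finsetSort fun a _ b _ hab => sub_lt_sub_left hab 1
  rw [← List.map_reverse, ← hsort, List.map_map]
  exact List.map_congr_left fun q _ => Rat.ofNat_sub_den 1 q

/-- For `n ≥ 1`, the list of denominators of the elements of the Farey set
`F_n`, taken in increasing order, is a palindrome. -/
theorem farey_den_list_palindrome (n : ℕ) (hn : 1 ≤ n) (F : Finset ℚ)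
    (hF : ∀ q : ℚ, q ∈ F ↔ 0 ≤ q ∧ q ≤ 1 ∧ q.den ≤ n) :
    ((F.sort (· ≤ ·)).map Rat.den).reverse = (F.sort (· ≤ ·)).map Rat.den :=
  farey_den_list_palindrome_general n F hF
end
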